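/- For every integer N ≥ 2, in U(gl(N|1))[[t]] the elements T, T', H, E built from the longest bosonic root vector e_{1N} satisfy the Jordanian U_h(sl(2)) relations: T·T' = T'·T = 1, [H, T] = T² − 1, [H, T'] = T'² − 1, [T, E] = (t/2)(HT + TH), [T', E] = −(t/2)(HT' + T'H), and [H, E] = −(1/2)((T + T')E + E(T + T')). (This is the general-N embedding of Ohn's Jordanian sl(2) underlying the nonlinear realization of U_h(sl(N|1)) of Proposition 7.) -/

import Mathlib

noncomputable section

namespace SuperJordanian

open scoped BigOperators

/-- The generalized binomial coefficient `C(1/2, n)`. -/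
def cHalf (n : ℕ) : ℂ :=
  (∏ i ∈ Finset.range n, ((1 : ℂ) / 2 - (i : ℂ))) / (n.factorial : ℂ)

/-- Parity for `gl(N|1)`: `p(i,j) = 1` iff exactly one of `i`, `j` equals the last
index `N+1` (here `Fin.last N` in 0-based indexing). -/
def par (N : ℕ) (i j : Fin (N + 1)) : ℕ :=
  if (i = Fin.last N ∧ j ≠ Fin.last N) ∨ (i ≠ Fin.last N ∧ j = Fin.last N) then 1 else 0

/-- The generator `e_{ij}` in the free algebra. -/
def gen (N : ℕ) (i j : Fin (N + 1)) : FreeAlgebra ℂ (Fin (N + 1) × Fin (N + 1)) :=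
  FreeAlgebra.ι ℂ (i, j)

/-- Defining relations of the enveloping algebra `U(gl(N|1))`:
`e_{ij} e_{kl} - (-1)^{p(i,j)p(k,l)} e_{kl} e_{ij}
  = δ_{jk} e_{il} - (-1)^{p(i,j)p(k,l)} δ_{li} e_{kj}`. -/
inductive Rel (N : ℕ) :
    FreeAlgebra ℂ (Fin (N + 1) × Fin (N + 1)) → FreeAlgebra ℂ (Fin (N + 1) × Fin (N + 1)) → Prop
  | mk (i j k l : Fin (N + 1)) :
      Rel N (gen N i j * gen N k l
          - ((-1 : ℂ) ^ (par N i j * par N k l)) • (gen N k l * gen N i j))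
        ((if j = k then gen N i l else 0)
          - ((-1 : ℂ) ^ (par N i j * par N k l)) • (if l = i then gen N k j else 0))

/-- The enveloping algebra `U = U(gl(N|1))`. -/
abbrev U (N : ℕ) : Type := RingQuot (Rel N)

/-- The image of `e_{ij}` in `U`. -/
def e (N : ℕ) (i j : Fin (N + 1)) : U N := RingQuot.mkAlgHom ℂ (Rel N) (gen N i j)

/-- The index `N` in the 1-based labelling, i.e. `N - 1` in 0-based indexing. -/
def idxN (N : ℕ) : Fin (N + 1) := ⟨N - 1, by omega⟩

/-- The longest bosonic root vector `e_{1N}`. -/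
def e1N (N : ℕ) : U N := e N 0 (idxN N)

/-- `h_{1N} = e₁₁ − e_{NN}`. -/
def h1N (N : ℕ) : U N := e N 0 0 - e N (idxN N) (idxN N)

/-- `e_{N1}`. -/
def eN1 (N : ℕ) : U N := e N (idxN N) 0

/-- The central formal variable `t` in `U[[t]]`. -/
def tv (N : ℕ) : PowerSeries (U N) := PowerSeries.X

/-- The inclusion `U → U[[t]]` as constant power series. -/
def C (N : ℕ) : U N →+* PowerSeries (U N) := PowerSeries.C

/-- `s = Σ_{n ≥ 0} C(1/2, n) t^{2n} e_{1N}^{2n}`, so that `s² = 1 + t² e_{1N}²`. -/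
def s (N : ℕ) : PowerSeries (U N) :=
  PowerSeries.mk fun m => if m % 2 = 0 then cHalf (m / 2) • (e1N N ^ m) else 0

/-- `T = t e_{1N} + √(1 + t² e_{1N}²)`. -/
def T (N : ℕ) : PowerSeries (U N) := tv N * C N (e1N N) + s N

/-- `T' = −t e_{1N} + √(1 + t² e_{1N}²)`. -/
def T' (N : ℕ) : PowerSeries (U N) := -(tv N * C N (e1N N)) + s N

/-- `H = √(1 + t² e_{1N}²) h_{1N}`. -/
def H (N : ℕ) : PowerSeries (U N) := s N * C N (h1N N)

/-- `E = e_{N1} − (t²/4) e_{1N} (h_{1N}² − 1)`. -/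
def E (N : ℕ) : PowerSeries (U N) :=
  C N (eN1 N) - ((1 : ℂ) / 4) • (tv N ^ 2 * C N (e1N N * (h1N N ^ 2 - 1)))

/-- Commutator `[a, b] = ab - ba`. -/
def br {N : ℕ} (a b : PowerSeries (U N)) : PowerSeries (U N) := a * b - b * a

end SuperJordanian

/-!
Write `e = e_{1N}`, `h = h_{1N}`, `f = e_{N1}` and `φ g = g(t e)` for the image of
`g ∈ ℂ[[x]]` in `U[[t]]`. Then `φ` is a ring homomorphism (powers of `e` commute), `s = φ σ` with `σ = (1 + x²)^{1/2}`, and `T = φ(x + σ)`, `T' = φ(−x + σ)`.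
Only the `sl₂` relations `[h, e] = 2e`, `[e, f] = h`, `[h, f] = −2f` are needed: they give
`[h, eⁿ] = 2n eⁿ` and `[eⁿ, f] = n eⁿ⁻¹ h + n(n − 1) eⁿ⁻¹`, so that commuting `h` or `f` past
`φ g` acts on `g` by the differential operators `2x g'` and `t (g' h + x g'')`.
After normal ordering, every relation becomes an identity in the commutative ring `ℂ[[x]]`,
which follows from `σ² = 1 + x²` and its derivatives `σ σ' = x`, `σ'² + σ σ'' = 1`.
-/

open PowerSeries

def sqrtOneAddXSq : ℂ⟦X⟧ := expand 2 two_ne_zero (binomialSeries ℂ (1 / 2 : ℂ))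

lemma sqrtOneAddXSq_sq : sqrtOneAddXSq ^ 2 = 1 + X ^ 2 := by
  have h : (1 / 2 + 1 / 2 : ℂ) = ((1 : ℕ) : ℂ) := by norm_num
  rw [sqrtOneAddXSq, ← map_pow, sq, ← binomialSeries_add, h, binomialSeries_nat, pow_one,
    map_add, map_one, expand_X]

lemma sqrtOneAddXSq_mul_derivative : sqrtOneAddXSq * d⁄dX ℂ sqrtOneAddXSq = X := by
  have h := congrArg (d⁄dX ℂ) sqrtOneAddXSq_sq
  rw [Derivation.leibniz_pow, map_add, Derivation.leibniz_pow, derivative_one, derivative_X] at h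
  simp only [pow_one, Nat.add_one_sub_one, smul_eq_mul, mul_one, zero_add] at h
  rw [← Nat.cast_smul_eq_nsmul ℂ, ← Nat.cast_smul_eq_nsmul ℂ] at h
  exact smul_right_injective _ two_ne_zero h

lemma derivative_sqrtOneAddXSq_sq_add :
    d⁄dX ℂ sqrtOneAddXSq ^ 2 + sqrtOneAddXSq * d⁄dX ℂ (d⁄dX ℂ sqrtOneAddXSq) = 1 := by
  have h := congrArg (d⁄dX ℂ) sqrtOneAddXSq_mul_derivative
  rw [Derivation.leibniz, derivative_X, smul_eq_mul, smul_eq_mul] at h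
  linear_combination h

lemma derivative_two {R : Type*} [CommSemiring R] : d⁄dX R (2 : R⟦X⟧) = 0 := by
  exact_mod_cast (d⁄dX R).map_natCast 2

lemma coeff_X_mul_derivative {R : Type*} [CommSemiring R] (g : R⟦X⟧) (n : ℕ) :
    coeff n (X * d⁄dX R g) = n * coeff n g := by
  rcases n with _ | n
  · simp
  · rw [coeff_succ_X_mul, coeff_derivative, mul_comm]
    push_cast
    rfl

lemma C_quarter_mul_four : C (1 / 4 : ℂ) * 4 = (1 : ℂ⟦X⟧) := by
  rw [← map_ofNat C 4, ← map_mul]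
  norm_num

lemma half_smul_mul_two_mul {B : Type*} [Ring B] [Algebra ℂ B] (y z : B) :
    (1 / 2 : ℂ) • (y * (2 * z)) = y * z := by
  rw [two_mul, ← two_smul ℂ z, mul_smul_comm, smul_smul]
  norm_num

section Sl2

variable {A : Type*} [Ring A] {a h f : A}

lemma mul_pow_eq_of_mul_eq (hha : h * a = a * h + 2 • a) (n : ℕ) :
    h * a ^ n = a ^ n * h + (2 * n) • a ^ n := by
  induction n with
  | zero => simp
  | succ n ih =>
    rw [pow_succ, ← mul_assoc, ih, add_mul, mul_assoc, hha, mul_add, mul_smul_comm,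
      smul_mul_assoc, ← mul_assoc, ← pow_succ, add_assoc, ← add_smul]
    congr 2
    ring

lemma pow_succ_mul_eq_of_mul_eq (hha : h * a = a * h + 2 • a) (haf : a * f = f * a + h)
    (n : ℕ) :
    a ^ (n + 1) * f = f * a ^ (n + 1) + (n + 1) • (a ^ n * h) + ((n + 1) * n) • a ^ n := by
  induction n with
  | zero => simpa using haf
  | succ n ih =>
    rw [pow_succ', mul_assoc, ih, mul_add, mul_add, ← mul_assoc, haf, add_mul, mul_assoc f,
      ← pow_succ', mul_pow_eq_of_mul_eq hha, mul_smul_comm, mul_smul_comm, ← mul_assoc,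
      ← pow_succ']
    module

end Sl2

section Rescale

variable {R A : Type*} [CommSemiring R] [Semiring A] [Algebra R A]

/-- `g(X) ↦ g(a X)`, i.e. `PowerSeries.rescale` with a possibly noncommutative target. -/
def rescaleBy (a : A) : R⟦X⟧ →+* A⟦X⟧ where
  toFun g := mk fun n => coeff n g • a ^ n
  map_one' := by
    ext n
    by_cases hn : n = 0 <;> simp [coeff_one, hn]
  map_mul' f g := by
    ext n
    simp only [coeff_mk, coeff_mul, Finset.sum_smul]
    refine Finset.sum_congr rfl fun p hp => ?_
    rw [smul_mul_smul_comm, ← pow_add, Finset.HasAntidiagonal.mem_antidiagonal.mp hp]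
  map_zero' := by
    ext n
    simp
  map_add' f g := by
    ext n
    simp [add_smul]

@[simp]
lemma coeff_rescaleBy (a : A) (g : R⟦X⟧) (n : ℕ) :
    coeff n (rescaleBy a g) = coeff n g • a ^ n := by
  simp [rescaleBy]

lemma rescaleBy_X (a : A) : rescaleBy a (X : R⟦X⟧) = X * C a := by
  ext n
  rcases n with _ | _ | n <;> simp [coeff_X]

lemma rescaleBy_C (a : A) (r : R) : rescaleBy a (C r) = C (algebraMap R A r) := by
  ext n
  rcases n with _ | n <;> simp [coeff_C, Algebra.algebraMap_eq_smul_one]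

lemma commute_rescaleBy (a : A) (f g : R⟦X⟧) : Commute (rescaleBy a f) (rescaleBy a g) :=
  (Commute.all f g).map _

lemma smul_X_sq_mul_C (r : R) (a u : A) :
    r • (X ^ 2 * C (a * u)) = X * rescaleBy a (C r * X) * C u := by
  rw [map_mul (rescaleBy a), rescaleBy_C, rescaleBy_X, Algebra.smul_def,
    PowerSeries.algebraMap_apply, map_mul, sq, ← (commute_X (C (algebraMap R A r))).left_comm]
  noncomm_ring

end Rescale

section Sl2Series

variable {R A : Type*} [CommRing R] [Ring A] [Algebra R A] {a h f : A}

lemma commutator_C_rescaleBy (hha : h * a = a * h + 2 • a) (g : R⟦X⟧) :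
    C h * rescaleBy a g - rescaleBy a g * C h = rescaleBy a (2 * X * d⁄dX R g) := by
  ext n
  rw [mul_assoc, two_mul]
  simp only [map_sub, map_add, coeff_C_mul, coeff_mul_C, coeff_rescaleBy, mul_smul_comm,
    smul_mul_assoc, mul_pow_eq_of_mul_eq hha, coeff_X_mul_derivative]
  module

lemma commutator_rescaleBy_C (hha : h * a = a * h + 2 • a) (haf : a * f = f * a + h)
    (g : R⟦X⟧) :
    rescaleBy a g * C f - C f * rescaleBy a g
      = X * (rescaleBy a (d⁄dX R g) * C h + rescaleBy a (X * d⁄dX R (d⁄dX R g))) := by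
  ext n
  rcases n with _ | n
  · simp only [map_sub, coeff_C_mul, coeff_mul_C, coeff_rescaleBy, coeff_zero_X_mul, pow_zero,
      smul_mul_assoc, mul_smul_comm, one_mul, mul_one, sub_self]
  simp only [map_sub, map_add, coeff_C_mul, coeff_mul_C, coeff_rescaleBy, mul_smul_comm,
    smul_mul_assoc, pow_succ_mul_eq_of_mul_eq hha haf, coeff_succ_X_mul, coeff_X_mul_derivative,
    coeff_derivative]
  module

end Sl2Series

section Jordanian

variable {A : Type*} [Ring A] [Algebra ℂ A] {a h f : A}

lemma commutator_rescaleBy_mul_C (hha : h * a = a * h + 2 • a) (p g : ℂ⟦X⟧) :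
    rescaleBy a p * C h * rescaleBy a g - rescaleBy a g * (rescaleBy a p * C h)
      = rescaleBy a (2 * X * (p * d⁄dX ℂ g)) := by
  calc _ = rescaleBy a p * (C h * rescaleBy a g - rescaleBy a g * C h)
        + (rescaleBy a p * rescaleBy a g - rescaleBy a g * rescaleBy a p) * C h := by
          noncomm_ring
    _ = _ := by
      rw [commutator_C_rescaleBy hha, (commute_rescaleBy a p g).eq, sub_self, zero_mul,
        add_zero, ← map_mul]
      ring_nf

lemma anticommutator_rescaleBy_mul_C (hha : h * a = a * h + 2 • a) (p g : ℂ⟦X⟧) :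
    rescaleBy a p * C h * rescaleBy a g + rescaleBy a g * (rescaleBy a p * C h)
      = 2 * (rescaleBy a (p * g) * C h + rescaleBy a (X * (p * d⁄dX ℂ g))) := by
  have h2 : rescaleBy a (p * (2 * X * d⁄dX ℂ g)) = 2 * rescaleBy a (X * (p * d⁄dX ℂ g)) := by
    rw [← map_ofNat (rescaleBy (R := ℂ) a) 2, ← map_mul]
    ring_nf
  calc _ = rescaleBy a p * (C h * rescaleBy a g - rescaleBy a g * C h)
        + rescaleBy a p * rescaleBy a g * C h + rescaleBy a g * rescaleBy a p * C h := by
          noncomm_ring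
    _ = _ := by
      rw [commutator_C_rescaleBy hha, (commute_rescaleBy a g p).eq, ← map_mul, ← map_mul, h2]
      noncomm_ring

lemma commutator_rescaleBy_E (hha : h * a = a * h + 2 • a) (haf : a * f = f * a + h)
    (g q : ℂ⟦X⟧) :
    rescaleBy a g * (C f - X * rescaleBy a q * (C h ^ 2 - 1))
        - (C f - X * rescaleBy a q * (C h ^ 2 - 1)) * rescaleBy a g
      = X * (rescaleBy a (d⁄dX ℂ g + 2 * (q * (2 * X * d⁄dX ℂ g))) * C h
          + rescaleBy a (X * d⁄dX ℂ (d⁄dX ℂ g)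
              + q * (2 * X * d⁄dX ℂ (2 * X * d⁄dX ℂ g)))) := by
  have hf := commutator_rescaleBy_C hha haf g
  have hg := commutator_C_rescaleBy hha g
  have hu := commutator_C_rescaleBy hha (2 * X * d⁄dX ℂ g)
  generalize 2 * X * d⁄dX ℂ g = u at hg hu ⊢
  generalize 2 * X * d⁄dX ℂ u = v at hu ⊢
  generalize X * d⁄dX ℂ (d⁄dX ℂ g) = w at hf ⊢
  have hsq : C h ^ 2 * rescaleBy a g - rescaleBy a g * C h ^ 2
      = 2 * (rescaleBy a u * C h) + rescaleBy a v := by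
    calc _ = C h * (C h * rescaleBy a g - rescaleBy a g * C h)
          + (C h * rescaleBy a g - rescaleBy a g * C h) * C h := by noncomm_ring
      _ = (C h * rescaleBy a u - rescaleBy a u * C h) + 2 * (rescaleBy a u * C h) := by
          rw [hg]
          noncomm_ring
      _ = _ := by rw [hu, add_comm]
  calc _ = (rescaleBy a g * C f - C f * rescaleBy a g)
        + X * rescaleBy a q * (C h ^ 2 * rescaleBy a g - rescaleBy a g * C h ^ 2)
        - (rescaleBy a g * X - X * rescaleBy a g) * rescaleBy a q * (C h ^ 2 - 1)
        - X * (rescaleBy a g * rescaleBy a q - rescaleBy a q * rescaleBy a g) * (C h ^ 2 - 1) := by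
          noncomm_ring
    _ = _ := by
      rw [hf, hsq, ← X_mul, (commute_rescaleBy a g q).eq, sub_self, sub_self, map_add, map_add,
        map_mul, map_mul, map_mul, map_ofNat]
      noncomm_ring

lemma commutator_C_E (hha : h * a = a * h + 2 • a) (hhf : h * f = f * h - 2 • f) (q : ℂ⟦X⟧) :
    C h * (C f - X * rescaleBy a q * (C h ^ 2 - 1))
        - (C f - X * rescaleBy a q * (C h ^ 2 - 1)) * C h
      = -(2 * C f) - X * rescaleBy a (2 * X * d⁄dX ℂ q) * (C h ^ 2 - 1) := by
  have hF : C h * C f - C f * C h = -(2 * C f) := by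
    rw [← map_mul, ← map_mul, hhf, ← map_sub, sub_sub_cancel_left, map_neg, map_nsmul,
      nsmul_eq_mul, Nat.cast_ofNat]
  calc _ = (C h * C f - C f * C h) - X * (C h * rescaleBy a q - rescaleBy a q * C h) * (C h ^ 2 - 1)
        - (C h * X - X * C h) * rescaleBy a q * (C h ^ 2 - 1) := by noncomm_ring
    _ = _ := by
      rw [hF, commutator_C_rescaleBy hha, (commute_X (C h)).eq, sub_self, zero_mul, zero_mul,
        sub_zero]

def jordanT (a : A) : A⟦X⟧ := rescaleBy a (X + sqrtOneAddXSq)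

def jordanT' (a : A) : A⟦X⟧ := rescaleBy a (-X + sqrtOneAddXSq)

def jordanH (a h : A) : A⟦X⟧ := rescaleBy a sqrtOneAddXSq * C h

/-- `f − (t²/4) e (h² − 1)`, with `t² e / 4` written as `t · (t e / 4)`. -/
def jordanE (a h f : A) : A⟦X⟧ := C f - X * rescaleBy a (C (1 / 4 : ℂ) * X) * (C h ^ 2 - 1)

variable (a) in
lemma jordanT_mul_jordanT' : jordanT a * jordanT' a = 1 := by
  rw [jordanT, jordanT', ← map_mul, ← map_one (rescaleBy (R := ℂ) a)]
  congr 1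
  linear_combination sqrtOneAddXSq_sq

variable (a) in
lemma jordanT'_mul_jordanT : jordanT' a * jordanT a = 1 := by
  rw [jordanT, jordanT', ← map_mul, ← map_one (rescaleBy (R := ℂ) a)]
  congr 1
  linear_combination sqrtOneAddXSq_sq

lemma commutator_jordanH_jordanT (hha : h * a = a * h + 2 • a) :
    jordanH a h * jordanT a - jordanT a * jordanH a h = jordanT a ^ 2 - 1 := by
  rw [jordanH, jordanT, commutator_rescaleBy_mul_C hha, ← map_pow,
    ← map_one (rescaleBy (R := ℂ) a), ← map_sub]
  congr 1
  simp only [map_add, derivative_X]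
  linear_combination 2 * X * sqrtOneAddXSq_mul_derivative - sqrtOneAddXSq_sq

lemma commutator_jordanH_jordanT' (hha : h * a = a * h + 2 • a) :
    jordanH a h * jordanT' a - jordanT' a * jordanH a h = jordanT' a ^ 2 - 1 := by
  rw [jordanH, jordanT', commutator_rescaleBy_mul_C hha, ← map_pow,
    ← map_one (rescaleBy (R := ℂ) a), ← map_sub]
  congr 1
  simp only [map_add, map_neg, derivative_X]
  linear_combination 2 * X * sqrtOneAddXSq_mul_derivative - sqrtOneAddXSq_sq

lemma commutator_jordanT_jordanE (hha : h * a = a * h + 2 • a) (haf : a * f = f * a + h) :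
    jordanT a * jordanE a h f - jordanE a h f * jordanT a
      = (1 / 2 : ℂ) • (X * (jordanH a h * jordanT a + jordanT a * jordanH a h)) := by
  rw [jordanE, jordanH, jordanT, commutator_rescaleBy_E hha haf,
    anticommutator_rescaleBy_mul_C hha, half_smul_mul_two_mul]
  congr 4
  · simp only [map_add, derivative_X]
    linear_combination X ^ 2 * (1 + d⁄dX ℂ sqrtOneAddXSq) * C_quarter_mul_four
      - (1 + d⁄dX ℂ sqrtOneAddXSq) * sqrtOneAddXSq_sq
      + sqrtOneAddXSq * sqrtOneAddXSq_mul_derivative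
  · simp only [Derivation.leibniz, map_add, derivative_X, derivative_one, derivative_two,
      smul_eq_mul]
    linear_combination (X ^ 2 * (1 + d⁄dX ℂ sqrtOneAddXSq)
        + X ^ 3 * d⁄dX ℂ (d⁄dX ℂ sqrtOneAddXSq)) * C_quarter_mul_four
      - X * d⁄dX ℂ (d⁄dX ℂ sqrtOneAddXSq) * sqrtOneAddXSq_sq
      + X * sqrtOneAddXSq * derivative_sqrtOneAddXSq_sq_add
      - X * (1 + d⁄dX ℂ sqrtOneAddXSq) * sqrtOneAddXSq_mul_derivative

lemma commutator_jordanT'_jordanE (hha : h * a = a * h + 2 • a) (haf : a * f = f * a + h) :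
    jordanT' a * jordanE a h f - jordanE a h f * jordanT' a
      = -((1 / 2 : ℂ) • (X * (jordanH a h * jordanT' a + jordanT' a * jordanH a h))) := by
  rw [jordanE, jordanH, jordanT', commutator_rescaleBy_E hha haf,
    anticommutator_rescaleBy_mul_C hha, half_smul_mul_two_mul, ← mul_neg, neg_add, ← neg_mul,
    ← map_neg, ← map_neg]
  congr 4
  · simp only [map_add, map_neg, derivative_X]
    linear_combination X ^ 2 * (-1 + d⁄dX ℂ sqrtOneAddXSq) * C_quarter_mul_four
      - (-1 + d⁄dX ℂ sqrtOneAddXSq) * sqrtOneAddXSq_sq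
      + sqrtOneAddXSq * sqrtOneAddXSq_mul_derivative
  · simp only [Derivation.leibniz, map_add, map_neg, derivative_X, derivative_one,
      derivative_two, smul_eq_mul]
    linear_combination (X ^ 2 * (-1 + d⁄dX ℂ sqrtOneAddXSq)
        + X ^ 3 * d⁄dX ℂ (d⁄dX ℂ sqrtOneAddXSq)) * C_quarter_mul_four
      - X * d⁄dX ℂ (d⁄dX ℂ sqrtOneAddXSq) * sqrtOneAddXSq_sq
      + X * sqrtOneAddXSq * derivative_sqrtOneAddXSq_sq_add
      - X * (-1 + d⁄dX ℂ sqrtOneAddXSq) * sqrtOneAddXSq_mul_derivative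

lemma commutator_rescaleBy_sqrtOneAddXSq_jordanE (hha : h * a = a * h + 2 • a)
    (haf : a * f = f * a + h) :
    rescaleBy a sqrtOneAddXSq * jordanE a h f - jordanE a h f * rescaleBy a sqrtOneAddXSq
      = X * (rescaleBy a (X * sqrtOneAddXSq) * C h + rescaleBy a (X * sqrtOneAddXSq)) := by
  rw [jordanE, commutator_rescaleBy_E hha haf]
  congr 4
  · linear_combination X ^ 2 * d⁄dX ℂ sqrtOneAddXSq * C_quarter_mul_four
      - d⁄dX ℂ sqrtOneAddXSq * sqrtOneAddXSq_sq + sqrtOneAddXSq * sqrtOneAddXSq_mul_derivative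
  · simp only [Derivation.leibniz, derivative_X, derivative_two, smul_eq_mul]
    linear_combination (X ^ 2 * d⁄dX ℂ sqrtOneAddXSq
        + X ^ 3 * d⁄dX ℂ (d⁄dX ℂ sqrtOneAddXSq)) * C_quarter_mul_four
      - X * d⁄dX ℂ (d⁄dX ℂ sqrtOneAddXSq) * sqrtOneAddXSq_sq
      + X * sqrtOneAddXSq * derivative_sqrtOneAddXSq_sq_add
      - X * d⁄dX ℂ sqrtOneAddXSq * sqrtOneAddXSq_mul_derivative

lemma commutator_jordanH_jordanE (hha : h * a = a * h + 2 • a) (haf : a * f = f * a + h)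
    (hhf : h * f = f * h - 2 • f) :
    jordanH a h * jordanE a h f - jordanE a h f * jordanH a h
      = -((1 / 2 : ℂ) • ((jordanT a + jordanT' a) * jordanE a h f
          + jordanE a h f * (jordanT a + jordanT' a))) := by
  set S := rescaleBy a sqrtOneAddXSq
  set q : ℂ⟦X⟧ := C (1 / 4 : ℂ) * X
  have hsum : jordanT a + jordanT' a = S + S := by
    rw [jordanT, jordanT', ← map_add, ← map_add]
    ring_nf
  have hXS : rescaleBy a (X * sqrtOneAddXSq)
      = S * (rescaleBy a (2 * X * d⁄dX ℂ q) + 2 * rescaleBy a q) := by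
    rw [← map_ofNat (rescaleBy (R := ℂ) a) 2, ← map_mul, ← map_add, ← map_mul]
    congr 1
    simp only [q, Derivation.leibniz, derivative_X, derivative_C, smul_eq_mul]
    linear_combination (-(X * sqrtOneAddXSq)) * C_quarter_mul_four
  calc _ = S * (C h * jordanE a h f - jordanE a h f * C h)
        + (S * jordanE a h f - jordanE a h f * S) * C h := by
          rw [jordanH]
          noncomm_ring
    _ = -(2 * (S * jordanE a h f)) + (S * jordanE a h f - jordanE a h f * S) := by
      rw [jordanE, commutator_C_E hha hhf, ← jordanE,
        commutator_rescaleBy_sqrtOneAddXSq_jordanE hha haf, hXS, jordanE]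
      simp only [mul_sub, mul_neg, ← mul_assoc, (commute_X S).eq]
      noncomm_ring
    _ = _ := by
      rw [hsum, add_mul, mul_add, add_add_add_comm, ← two_smul ℂ, smul_smul]
      norm_num
      noncomm_ring

end Jordanian

namespace SuperJordanian

variable {N : ℕ}

lemma e_mul_e (i j k l : Fin (N + 1)) (hp : par N i j * par N k l = 0) :
    e N i j * e N k l
      = e N k l * e N i j + (if j = k then e N i l else 0) - (if l = i then e N k j else 0) := by
  have h := RingQuot.mkAlgHom_rel ℂ (Rel.mk (N := N) i j k l)
  simp only [hp, pow_zero, one_smul, map_sub, map_mul, apply_ite (RingQuot.mkAlgHom ℂ (Rel N)),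
    map_zero] at h
  simp only [e]
  rw [add_sub_assoc, ← h]
  noncomm_ring

lemma par_eq_zero {i j : Fin (N + 1)} (hi : i ≠ Fin.last N) (hj : j ≠ Fin.last N) :
    par N i j = 0 := by
  simp [par, hi, hj]

lemma zero_ne_last (hN : N ≠ 0) : (0 : Fin (N + 1)) ≠ Fin.last N := by
  simpa [Fin.ext_iff] using hN.symm

lemma idxN_ne_last (hN : N ≠ 0) : idxN N ≠ Fin.last N := by
  simp only [ne_eq, Fin.ext_iff, idxN, Fin.val_last]
  omega

lemma idxN_ne_zero (hN : 2 ≤ N) : idxN N ≠ 0 := by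
  simp only [ne_eq, Fin.ext_iff, idxN, Fin.val_zero]
  omega

lemma h1N_mul_e1N (hN : 2 ≤ N) : h1N N * e1N N = e1N N * h1N N + 2 • e1N N := by
  have hN0 : N ≠ 0 := by omega
  have h0 := par_eq_zero (zero_ne_last hN0) (zero_ne_last hN0)
  have hm := par_eq_zero (idxN_ne_last hN0) (idxN_ne_last hN0)
  rw [h1N, e1N, sub_mul, mul_sub, e_mul_e 0 0 0 (idxN N) (by rw [h0, zero_mul]),
    e_mul_e (idxN N) (idxN N) 0 (idxN N) (by rw [hm, zero_mul])]
  simp only [↓reduceIte, idxN_ne_zero hN, sub_zero, add_zero, nsmul_eq_mul, Nat.cast_ofNat]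
  noncomm_ring

lemma e1N_mul_eN1 (hN : N ≠ 0) : e1N N * eN1 N = eN1 N * e1N N + h1N N := by
  have h0m := par_eq_zero (zero_ne_last hN) (idxN_ne_last hN)
  rw [e1N, eN1, h1N, e_mul_e 0 (idxN N) (idxN N) 0 (by rw [h0m, zero_mul])]
  simp [add_sub_assoc]

lemma h1N_mul_eN1 (hN : 2 ≤ N) : h1N N * eN1 N = eN1 N * h1N N - 2 • eN1 N := by
  have hN0 : N ≠ 0 := by omega
  have h0 := par_eq_zero (zero_ne_last hN0) (zero_ne_last hN0)
  have hm := par_eq_zero (idxN_ne_last hN0) (idxN_ne_last hN0)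
  rw [h1N, eN1, sub_mul, mul_sub, e_mul_e 0 0 (idxN N) 0 (by rw [h0, zero_mul]),
    e_mul_e (idxN N) (idxN N) (idxN N) 0 (by rw [hm, zero_mul])]
  simp only [(idxN_ne_zero hN).symm, ↓reduceIte, add_zero, sub_zero, nsmul_eq_mul,
    Nat.cast_ofNat]
  noncomm_ring

lemma choose_half (n : ℕ) : Ring.choose (1 / 2 : ℂ) n = cHalf n := by
  rw [Ring.choose_eq_smul, ← Polynomial.aeval_eq_smeval, ← Polynomial.eval_map_algebraMap,
    descPochhammer_map, descPochhammer_eval_eq_prod_range, cHalf, smul_eq_mul, inv_mul_eq_div]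

lemma s_eq_rescaleBy : s N = rescaleBy (e1N N) sqrtOneAddXSq := by
  ext m
  rw [s, coeff_mk, coeff_rescaleBy, sqrtOneAddXSq, coeff_expand, binomialSeries_coeff,
    choose_half, smul_eq_mul, mul_one]
  simp only [Nat.dvd_iff_mod_eq_zero]
  split_ifs <;> simp

lemma T_eq_jordanT : T N = jordanT (e1N N) := by
  rw [T, jordanT, map_add, rescaleBy_X, s_eq_rescaleBy]
  rfl

lemma T'_eq_jordanT' : T' N = jordanT' (e1N N) := by
  rw [T', jordanT', map_add, map_neg, rescaleBy_X, s_eq_rescaleBy]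
  rfl

lemma H_eq_jordanH : H N = jordanH (e1N N) (h1N N) := by
  rw [H, jordanH, s_eq_rescaleBy]
  rfl

lemma E_eq_jordanE : E N = jordanE (e1N N) (h1N N) (eN1 N) := by
  rw [E, jordanE, C, tv, smul_X_sq_mul_C, map_sub, map_pow, map_one]

/-- for every `N ≥ 2`, the elements `T`, `T'`, `H`, `E` built from the
longest bosonic root vector `e_{1N}` of `U(gl(N|1))[[t]]` satisfy the Jordanian
`U_h(sl(2))` relations. -/
theorem statement19 (N : ℕ) (hN : 2 ≤ N) :
    T N * T' N = 1 ∧ T' N * T N = 1 ∧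
    br (H N) (T N) = T N ^ 2 - 1 ∧
    br (H N) (T' N) = T' N ^ 2 - 1 ∧
    br (T N) (E N) = ((1 : ℂ) / 2) • (tv N * (H N * T N + T N * H N)) ∧
    br (T' N) (E N) = -(((1 : ℂ) / 2) • (tv N * (H N * T' N + T' N * H N))) ∧
    br (H N) (E N) =
      -(((1 : ℂ) / 2) • ((T N + T' N) * E N + E N * (T N + T' N))) := by
  have hha := h1N_mul_e1N hN
  have haf := e1N_mul_eN1 (by omega : N ≠ 0)
  have hhf := h1N_mul_eN1 hN
  simp only [br, T_eq_jordanT, T'_eq_jordanT', H_eq_jordanH, E_eq_jordanE]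
  exact ⟨jordanT_mul_jordanT' _, jordanT'_mul_jordanT _, commutator_jordanH_jordanT hha,
    commutator_jordanH_jordanT' hha, commutator_jordanT_jordanE hha haf,
    commutator_jordanT'_jordanE hha haf, commutator_jordanH_jordanE hha haf hhf⟩

end SuperJordanian
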